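/- arXiv:2304.03985 — 2 statements merged into one kernel-verified Lean document; each statement's English description precedes it below -/
import Mathlib

section
/- Let T1 and T2 be full binary trees with n internal nodes each, and for i ∈ {1,2} let T_i' be the tree obtained from the right comb on n+1 internal nodes by replacing the left-child leaf of its root with the tree T_i. Then T_1' and T_2' have height n+1, and for every k ∈ ℕ, d(T1, T2) ≤ k if and only if d_H(T_1', T_2') ≤ k. -/
/-- Full binary trees: every node is a leaf or has exactly two children.
`node l r` is an internal node with left subtree `l` and right subtree `r`. -/
inductive FBT : Type
  | leaf : FBT
  | node : FBT → FBT → FBT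
  deriving DecidableEq

namespace FBT

/-- Number of internal nodes. -/
def internal : FBT → ℕ
  | leaf => 0
  | node l r => internal l + internal r + 1

/-- Height: maximum number of internal nodes on a root-to-leaf path. -/
def height : FBT → ℕ
  | leaf => 0
  | node l r => max (height l) (height r) + 1

/-- Rank of a full binary tree (Ehrenfeucht–Haussler rank). -/
def rank : FBT → ℕ
  | leaf => 0
  | node l r => if rank l = rank r then rank l + 1 else max (rank l) (rank r)

/-- A full binary tree is skew if every internal node has at least one leaf child. -/
def skew : FBT → Prop
  | leaf => True
  | node l r => (l = leaf ∨ r = leaf) ∧ skew l ∧ skew r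

/-- Pre-order traversal of the internal nodes, labeled by the in-order labeling
(1-indexed); `off` is the number of in-order labels used strictly to the left
of this subtree.  `T.preorderAux 0` is the tree permutation of `T`, as a list. -/
def preorderAux : FBT → ℕ → List ℕ
  | leaf, _ => []
  | node l r, off =>
      (off + internal l + 1) :: (preorderAux l off ++ preorderAux r (off + internal l + 1))

/-- Number of internal nodes on the rightmost root-to-leaf path. -/
def rightPath : FBT → ℕ
  | leaf => 0
  | node _ r => rightPath r + 1

end FBT

/-- One (left or right) rotation, performed at some node of the tree. -/
inductive Rot : FBT → FBT → Prop
  | rotR (C D E : FBT) : Rot (FBT.node (FBT.node C D) E) (FBT.node C (FBT.node D E))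
  | rotL (C D E : FBT) : Rot (FBT.node C (FBT.node D E)) (FBT.node (FBT.node C D) E)
  | congrL {l l' : FBT} (r : FBT) : Rot l l' → Rot (FBT.node l r) (FBT.node l' r)
  | congrR {r r' : FBT} (l : FBT) : Rot r r' → Rot (FBT.node l r) (FBT.node l r')

/-- `RotChainP P k T1 T2`: there is a sequence of `k` rotations transforming `T1`
into `T2` in which every tree reached along the way satisfies `P`. -/
def RotChainP (P : FBT → Prop) : ℕ → FBT → FBT → Prop
  | 0, T1, T2 => T1 = T2
  | k+1, T1, T2 => ∃ T, Rot T1 T ∧ P T ∧ RotChainP P k T T2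

/-- `RotChain k T1 T2`: `T1` can be transformed into `T2` by `k` rotations. -/
def RotChain : ℕ → FBT → FBT → Prop := RotChainP fun _ => True

/-- The rotation distance between two full binary trees. -/
noncomputable def rotDist (T1 T2 : FBT) : ℕ := sInf {k | RotChain k T1 T2}

/-- The right comb on `n` internal nodes. -/
def rightComb : ℕ → FBT
  | 0 => FBT.leaf
  | n+1 => FBT.node FBT.leaf (rightComb n)

/-- The left comb on `n` internal nodes. -/
def leftComb : ℕ → FBT
  | 0 => FBT.leaf
  | n+1 => FBT.node (leftComb n) FBT.leaf

/-- The complete binary tree of height `r`. -/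
def completeTree : ℕ → FBT
  | 0 => FBT.leaf
  | r+1 => FBT.node (completeTree r) (completeTree r)

/-- Replace the leftmost leaf of the first tree by the second tree. -/
def attachLeftmost : FBT → FBT → FBT
  | FBT.leaf, S => S
  | FBT.node l r, S => FBT.node (attachLeftmost l S) r

/-- The transposition `δ_{i,j,k}` (1-indexed, `1 ≤ i < j < k`) applied to a list:
the consecutive blocks occupying positions `i..j-1` and `j..k-1` are swapped,
all other positions are left fixed. -/
def transposeList (i j k : ℕ) (l : List ℕ) : List ℕ :=
  l.take (i-1) ++ (l.drop (j-1)).take (k-j) ++ (l.drop (i-1)).take (j-i) ++ l.drop (k-1)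

/-- `δ_{i,j,k}` is a tree transposition (on permutations of `n` elements): there are
full binary trees `T1, T2` with `n` internal nodes each, at rotation distance `1`,
whose tree permutations `σ, τ` satisfy `δ_{i,j,k}(σ) = τ`. -/
def IsTreeTransposition (n i j k : ℕ) : Prop :=
  ∃ T1 T2 : FBT, T1.internal = n ∧ T2.internal = n ∧ rotDist T1 T2 = 1 ∧
    transposeList i j k (T1.preorderAux 0) = T2.preorderAux 0

/-- `σ` (a permutation of `Fin n`) is a tree permutation: the pre-order traversal of
some full binary tree with `n` internal nodes under the in-order labeling.
(Positions and values are converted to 1-indexed labels.) -/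
def IsTreePerm (n : ℕ) (σ : Equiv.Perm (Fin n)) : Prop :=
  ∃ T : FBT, T.internal = n ∧ T.preorderAux 0 = List.ofFn fun i => (σ i : ℕ) + 1

/-- `σ` is a skew permutation: the tree permutation of some full skew tree. -/
def IsSkewPerm (n : ℕ) (σ : Equiv.Perm (Fin n)) : Prop :=
  ∃ T : FBT, T.internal = n ∧ T.skew ∧ T.preorderAux 0 = List.ofFn fun i => (σ i : ℕ) + 1

/-- `SkewSim σ τ` (written `σ ∼ τ` in the paper): `τ` is obtained from `σ` (lists,
0-indexed) by a skew transposition: for some position `i`, `σ(i)` and `σ(i+1)` are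
respectively the min and the max (or the max and the min) of the suffix starting at
position `i`, and `τ` is `σ` with the entries at positions `i` and `i+1` swapped. -/
def SkewSim (σ τ : List ℕ) : Prop :=
  ∃ i : ℕ, i + 1 < σ.length ∧
    (((∀ x ∈ σ.drop i, σ.getD i 0 ≤ x) ∧ (∀ x ∈ σ.drop i, x ≤ σ.getD (i+1) 0)) ∨
     ((∀ x ∈ σ.drop i, x ≤ σ.getD i 0) ∧ (∀ x ∈ σ.drop i, σ.getD (i+1) 0 ≤ x))) ∧
    τ = σ.take i ++ [σ.getD (i+1) 0, σ.getD i 0] ++ σ.drop (i+2)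

/-- The tree polynomial of a full binary tree: the sum over all leaves of `x^a y^b`,
where `a` (resp. `b`) is the number of left (resp. right) edges on the root-to-leaf
path.  `X 0` plays the role of `x` and `X 1` the role of `y`. -/
noncomputable def treePoly : FBT → MvPolynomial (Fin 2) ℕ
  | FBT.leaf => 1
  | FBT.node l r => MvPolynomial.X 0 * treePoly l + MvPolynomial.X 1 * treePoly r



/-!
Rotations inside the left subtree `T` of `node T (rightComb n)` never raise the height above
`n + 1`, because every tree with `n` internal nodes has height at most `n`; so a rotation
sequence from `T1` to `T2` lifts to a height-bounded one of the same length. Conversely,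
restricting a tree to its first `n` internal nodes in in-order maps each rotation
either to a rotation or to the identity, and maps `node Ti (rightComb n)` back to `Ti`; so any
rotation sequence between the lifted trees projects to one between `T1` and `T2` that is no
longer.
-/

namespace FBT

theorem height_le_internal : ∀ T : FBT, T.height ≤ T.internal
  | leaf => le_rfl
  | node l r => by
    have := height_le_internal l
    have := height_le_internal r
    simp only [height, internal]
    omega

theorem height_rightComb : ∀ n, (rightComb n).height = n
  | 0 => rfl
  | n + 1 => by simp [rightComb, height, height_rightComb n]

theorem height_node_rightComb {T : FBT} {n : ℕ} (h : T.internal = n) :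
    (node T (rightComb n)).height = n + 1 := by
  have := height_le_internal T
  simp only [height, height_rightComb]
  omega

/-- The subtree spanned by the first `i` internal nodes in in-order. -/
def trunc : FBT → ℕ → FBT
  | leaf, _ => leaf
  | node l r, i => if i ≤ l.internal then l.trunc i else node l (r.trunc (i - l.internal - 1))

theorem trunc_of_internal_le : ∀ {T : FBT} {i : ℕ}, T.internal ≤ i → T.trunc i = T
  | leaf, _, _ => rfl
  | node l r, i, h => by
    simp only [internal] at h
    simp only [trunc, show ¬ i ≤ l.internal by omega, if_false]
    rw [trunc_of_internal_le (by omega)]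

theorem trunc_node_internal (l r : FBT) : (node l r).trunc l.internal = l := by
  simp only [trunc, le_rfl, if_true, trunc_of_internal_le le_rfl]

end FBT

open FBT

namespace Rot

theorem internal_eq {T T' : FBT} (h : Rot T T') : T.internal = T'.internal := by
  induction h <;> simp only [internal] at * <;> omega

theorem symm {T T' : FBT} (h : Rot T T') : Rot T' T := by
  induction h with
  | rotR C D E => exact rotL C D E
  | rotL C D E => exact rotR C D E
  | congrL r _ ih => exact congrL r ih
  | congrR l _ ih => exact congrR l ih

theorem trunc_rotR_eq_or_rot (C D E : FBT) (i : ℕ) :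
    (node (node C D) E).trunc i = (node C (node D E)).trunc i ∨
      Rot ((node (node C D) E).trunc i) ((node C (node D E)).trunc i) := by
  by_cases hC : i ≤ C.internal
  · left
    simp [trunc, internal, hC, show i ≤ C.internal + D.internal + 1 by omega]
  by_cases hD : i ≤ C.internal + D.internal + 1
  · left
    simp [trunc, internal, hC, hD, show i - C.internal - 1 ≤ D.internal by omega]
  right
  simp only [trunc, internal, hC, hD, show ¬ i - C.internal - 1 ≤ D.internal by omega, if_false]
  rw [show i - (C.internal + D.internal + 1) - 1 = i - C.internal - 1 - D.internal - 1 by omega]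
  exact rotR C D _

theorem trunc_eq_or_rot {T T' : FBT} (h : Rot T T') (i : ℕ) :
    T.trunc i = T'.trunc i ∨ Rot (T.trunc i) (T'.trunc i) := by
  induction h generalizing i with
  | rotR C D E => exact trunc_rotR_eq_or_rot C D E i
  | rotL C D E => exact (trunc_rotR_eq_or_rot C D E i).imp Eq.symm symm
  | @congrL l l' r hl ih =>
    by_cases hi : i ≤ l.internal
    · simpa only [trunc, hi, hl.internal_eq ▸ hi, if_true] using ih i
    · right
      simpa only [trunc, hi, hl.internal_eq ▸ hi, if_false, hl.internal_eq] using
        congrL _ hl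
  | @congrR r r' l _ ih =>
    by_cases hi : i ≤ l.internal
    · simp [trunc, hi]
    · simp only [trunc, hi, if_false, node.injEq, true_and]
      exact (ih _).imp id (congrR l)

end Rot

theorem RotChainP.exists_rotChain_trunc {P : FBT → Prop} {m : ℕ} {S S' : FBT}
    (h : RotChainP P m S S') (i : ℕ) : ∃ m' ≤ m, RotChain m' (S.trunc i) (S'.trunc i) := by
  induction m generalizing S with
  | zero => exact ⟨0, le_rfl, congrArg (trunc · i) h⟩
  | succ m ih =>
    obtain ⟨T, hST, -, hTS'⟩ := h
    obtain ⟨m', hm', hc⟩ := ih hTS'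
    rcases hST.trunc_eq_or_rot i with heq | hrot
    · exact ⟨m', by omega, heq ▸ hc⟩
    · exact ⟨m' + 1, by omega, T.trunc i, hrot, trivial, hc⟩

theorem RotChain.node_left {m : ℕ} {l l' : FBT} (r : FBT) (h : RotChain m l l') :
    RotChainP (fun S => S.height ≤ max l.internal r.height + 1) m (node l r) (node l' r) := by
  induction m generalizing l with
  | zero => exact congrArg (node · r) h
  | succ m ih =>
    obtain ⟨S, hlS, -, hSl'⟩ := h
    refine ⟨node S r, .congrL r hlS, ?_, hlS.internal_eq ▸ ih hSl'⟩
    have := height_le_internal S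
    simp only [height, hlS.internal_eq]
    omega

/-- attaching each `T_i` (with `n` internal nodes) as left subtree of the
root of the right comb on `n+1` internal nodes (i.e. replacing the left-child leaf of
its root) produces trees `T_i'` of height `n+1`, and `d(T1,T2) ≤ k` iff
`d_H(T1',T2') ≤ k` for every `k`. -/
theorem rotdist_reduces_to_height_bounded (n : ℕ) (T1 T2 : FBT)
    (h1 : T1.internal = n) (h2 : T2.internal = n) :
    (FBT.node T1 (rightComb n)).height = n + 1 ∧
    (FBT.node T2 (rightComb n)).height = n + 1 ∧
    ∀ k : ℕ,
      (∃ m ≤ k, RotChain m T1 T2) ↔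
      (∃ m ≤ k, RotChainP
        (fun S => S.height ≤
          max (FBT.node T1 (rightComb n)).height (FBT.node T2 (rightComb n)).height)
        m (FBT.node T1 (rightComb n)) (FBT.node T2 (rightComb n))) := by
  have hh1 := height_node_rightComb h1
  have hh2 := height_node_rightComb h2
  refine ⟨hh1, hh2, fun k => ⟨?_, ?_⟩⟩
  · rintro ⟨m, hmk, hchain⟩
    refine ⟨m, hmk, ?_⟩
    simpa only [hh1, hh2, h1, height_rightComb, max_self] using hchain.node_left (rightComb n)
  · rintro ⟨m, hmk, hchain⟩
    obtain ⟨m', hm', hc⟩ := hchain.exists_rotChain_trunc n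
    refine ⟨m', hm'.trans hmk, ?_⟩
    rwa [← h1, trunc_node_internal, h1, ← h2, trunc_node_internal] at hc
end

section
/- For every n ≥ 4, there exist two distinct full binary trees T1 and T2, each with n internal nodes, such that their tree polynomials are identical: p_{T1}(x,y) = p_{T2}(x,y). -/
/-! A leaf contributes a monomial that records only how many left and right edges lie above it,
not their order. Hence `node cherry (node B leaf)` and `node (node leaf B) cherry` have the same
polynomial `x² + y² + xy (1 + p_B)`; they have `B.internal + 3` internal nodes each and differ
as soon as `B` is not a leaf. -/

theorem FBT.internal_rightComb (n : ℕ) : (rightComb n).internal = n := by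
  induction n with
  | zero => rfl
  | succ n ih => simp [rightComb, FBT.internal, ih]

theorem treePoly_cherry_node_eq (B : FBT) :
    treePoly (.node (.node .leaf .leaf) (.node B .leaf)) =
      treePoly (.node (.node .leaf B) (.node .leaf .leaf)) := by
  simp only [treePoly]
  ring

/-- for every `n ≥ 4` there are two distinct full binary trees with `n`
internal nodes having identical tree polynomials. -/
theorem tree_polynomial_not_injective (n : ℕ) (hn : 4 ≤ n) :
    ∃ T1 T2 : FBT, T1 ≠ T2 ∧ T1.internal = n ∧ T2.internal = n ∧
      treePoly T1 = treePoly T2 := by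
  obtain ⟨m, rfl⟩ : ∃ m, n = m + 4 := ⟨n - 4, by omega⟩
  have hB : rightComb (m + 1) ≠ .leaf := nofun
  refine ⟨_, _, ?_, ?_, ?_, treePoly_cherry_node_eq (rightComb (m + 1))⟩
  · simpa [eq_comm] using hB
  all_goals simp only [FBT.internal, FBT.internal_rightComb]; omega
end
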